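/- arXiv:math/9905125 — 4 statements merged into one kernel-verified Lean document; each statement's English description precedes it below -/
import Mathlib

section
/- In the setup of a D-decomposed chain complex with chosen splittings: for every p and every a ∈ H'_p there exists a unique element f(a) ∈ B'_p such that d(a + f(a)) ∈ H'_{p−1} ⊕ B'_{p−1}. Moreover, if a ∈ H'(Q)_p then f(a) lies in ⊕_{P < Q} B'(P)_{p−1}. -/
noncomputable section

/-- The component `d(Q) : K(Q)_p → K(Q)_{p-1}` of the differential of a `D`-decomposed
chain complex: include `K(Q)_p` into `K_p`, apply `d`, and project back onto the
`Q`-summand. -/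
def componentD (k : Type*) [Field k] (D : Type*) [DecidableEq D]
    (V : D → ℕ → Type*) [∀ Q p, AddCommGroup (V Q p)] [∀ Q p, Module k (V Q p)]
    (d : ∀ p : ℕ, ((Q : D) → V Q p) →ₗ[k] ((Q : D) → V Q (p - 1)))
    (Q : D) (p : ℕ) : V Q p →ₗ[k] V Q (p - 1) :=
  (LinearMap.proj Q).comp ((d p).comp (LinearMap.single k (fun R => V R p) Q))

end

section Aux
attribute [local instance] Classical.propDecidable
set_option linter.unusedSectionVars false
variable {k : Type*} [Field k] {D : Type*} [Fintype D] [PartialOrder D] [DecidableEq D]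
  {V : D → ℕ → Type*} [∀ Q p, AddCommGroup (V Q p)] [∀ Q p, Module k (V Q p)]
  (d : ∀ p : ℕ, ((Q : D) → V Q p) →ₗ[k] ((Q : D) → V Q (p - 1)))

lemma componentD_apply (Q : D) (p : ℕ) (v : V Q p) :
    componentD k D V d Q p v = d p (Pi.single Q v) Q := rfl

/-- The tail: contributions to component `Q` from components strictly above `Q`. -/
noncomputable def tailC (p : ℕ) (x : ∀ Q, V Q p) (Q : D) : V Q (p - 1) :=
  ∑ R ∈ Finset.univ.filter (fun R => Q < R), d p (Pi.single R (x R)) Q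

lemma tailC_congr (p : ℕ) (x y : ∀ Q, V Q p) (Q : D) (h : ∀ R, Q < R → x R = y R) :
    tailC d p x Q = tailC d p y Q := by
  unfold tailC
  refine Finset.sum_congr rfl fun R hR => ?_
  rw [h R (by simpa using hR)]

lemma d_apply_eq (htri : ∀ (p : ℕ) (Q R : D) (a : V Q p), ¬ R ≤ Q → d p (Pi.single Q a) R = 0)
    (p : ℕ) (x : ∀ Q, V Q p) (Q : D) :
    d p x Q = componentD k D V d Q p (x Q) + tailC d p x Q := by
  conv_lhs => rw [← Finset.univ_sum_single x]
  rw [map_sum, Finset.sum_apply]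
  rw [← Finset.sum_filter_add_sum_filter_not Finset.univ (fun R => Q < R)
    (fun R => d p (Pi.single R (x R)) Q)]
  rw [add_comm, tailC]
  congr 1
  rw [Finset.sum_eq_single_of_mem Q (by simp)]
  · rfl
  · intro R hR hRQ
    exact htri p R Q (x R) (by simp at hR; intro hle; exact hR (lt_of_le_of_ne hle (Ne.symm hRQ)))

end Aux

section Aux2
attribute [local instance] Classical.propDecidable
set_option linter.unusedSectionVars false
variable {k : Type*} [Field k] {D : Type*} [Fintype D] [PartialOrder D] [DecidableEq D]
  {V : D → ℕ → Type*} [∀ Q p, AddCommGroup (V Q p)] [∀ Q p, Module k (V Q p)]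
  (d : ∀ p : ℕ, ((Q : D) → V Q p) →ₗ[k] ((Q : D) → V Q (p - 1)))
  (H' B' : (Q : D) → (p : ℕ) → Submodule k (V Q p))
  (hBH : ∀ Q p, Disjoint (LinearMap.range (componentD k D V d Q (p + 1))) (H' Q p))
  (hZ : ∀ Q p, LinearMap.range (componentD k D V d Q (p + 1)) ⊔ H' Q p =
    LinearMap.ker (componentD k D V d Q p))
  (hZB : ∀ Q p, Disjoint (LinearMap.ker (componentD k D V d Q p)) (B' Q p))
  (htop : ∀ Q p, LinearMap.ker (componentD k D V d Q p) ⊔ B' Q p = ⊤)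
  (hiso : ∀ Q p, Submodule.map (componentD k D V d Q p) (B' Q p) =
    LinearMap.range (componentD k D V d Q p))

include hZ in
lemma H'_le_ker (Q : D) (p : ℕ) : H' Q p ≤ LinearMap.ker (componentD k D V d Q p) :=
  le_sup_right.trans (hZ Q p).le

include hBH hZ hZB htop in
lemma isCompl_B (Q : D) (q : ℕ) :
    IsCompl (LinearMap.range (componentD k D V d Q (q + 1))) (H' Q q ⊔ B' Q q) := by
  constructor
  · rw [Submodule.disjoint_def]
    intro x hxB hxHB
    rw [Submodule.mem_sup] at hxHB
    obtain ⟨h, hh, b, hb, rfl⟩ := hxHB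
    have hbker : b ∈ LinearMap.ker (componentD k D V d Q q) := by
      have h1 : h + b ∈ LinearMap.ker (componentD k D V d Q q) :=
        le_sup_left.trans (hZ Q q).le hxB
      have h2 : h ∈ LinearMap.ker (componentD k D V d Q q) := H'_le_ker d H' hZ Q q hh
      simpa using sub_mem h1 h2
    have hb0 : b = 0 := Submodule.disjoint_def.mp (hZB Q q) b hbker hb
    subst hb0
    rw [add_zero] at hxB ⊢
    exact Submodule.disjoint_def.mp (hBH Q q) h hxB hh
  · rw [codisjoint_iff, ← sup_assoc, hZ Q q, htop Q q]

include hBH hZ hZB htop hiso in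
/-- Key step: unique correction in `B'(Q)_{q+1}` making `d(Q) b' + c` land in `H' ⊔ B'`. -/
lemma step_existsUnique (Q : D) (q : ℕ) (c : V Q (q + 1 - 1)) :
    ∃! b' : V Q (q + 1), b' ∈ B' Q (q + 1) ∧
      componentD k D V d Q (q + 1) b' + c ∈ H' Q q ⊔ B' Q q := by
  have hc := isCompl_B d H' B' hBH hZ hZB htop Q q
  set π := Submodule.linearProjOfIsCompl _ _ hc with hπ
  have hmem : ∀ x : V Q q, x ∈ H' Q q ⊔ B' Q q ↔ π x = 0 := fun x =>
    (Submodule.linearProjOfIsCompl_apply_eq_zero_iff hc).symm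
  have hβ : -(π c : V Q (q + 1 - 1)) ∈ LinearMap.range (componentD k D V d Q (q + 1)) :=
    neg_mem (π c).2
  have hβ2 : -(π c : V Q (q + 1 - 1)) ∈
      Submodule.map (componentD k D V d Q (q + 1)) (B' Q (q + 1)) := by
    rw [hiso]; exact hβ
  obtain ⟨b', hb'B, hb'd⟩ := hβ2
  have hπB : ∀ y : V Q (q + 1), π (componentD k D V d Q (q + 1) y)
      = ⟨componentD k D V d Q (q + 1) y, LinearMap.mem_range_self _ y⟩ :=
    fun y => Submodule.linearProjOfIsCompl_apply_left hc ⟨_, LinearMap.mem_range_self _ y⟩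
  refine ⟨b', ⟨hb'B, ?_⟩, ?_⟩
  · rw [hmem, map_add, hπB]
    ext
    show componentD k D V d Q (q + 1) b' + (π c : V Q (q + 1 - 1)) = 0
    rw [hb'd, neg_add_cancel]
  · rintro y ⟨hyB, hy⟩
    rw [hmem, map_add, hπB] at hy
    have hyd : componentD k D V d Q (q + 1) y = -(π c : V Q (q + 1 - 1)) := by
      have := congrArg (Subtype.val) (eq_neg_of_add_eq_zero_left hy)
      simpa using this
    have hker : y - b' ∈ LinearMap.ker (componentD k D V d Q (q + 1)) := by
      rw [LinearMap.mem_ker, map_sub, hyd, hb'd, sub_self]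
    have := Submodule.disjoint_def.mp (hZB Q (q + 1)) (y - b') hker (sub_mem hyB hb'B)
    simpa [sub_eq_zero] using this

end Aux2

section Aux3
attribute [local instance] Classical.propDecidable
set_option linter.unusedSectionVars false
variable {k : Type*} [Field k] {D : Type*} [Fintype D] [PartialOrder D] [DecidableEq D]
  {V : D → ℕ → Type*} [∀ Q p, AddCommGroup (V Q p)] [∀ Q p, Module k (V Q p)]
  (d : ∀ p : ℕ, ((Q : D) → V Q p) →ₗ[k] ((Q : D) → V Q (p - 1)))
  (H' B' : (Q : D) → (p : ℕ) → Submodule k (V Q p))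
  (htri : ∀ (p : ℕ) (Q R : D) (a : V Q p), ¬ R ≤ Q → d p (Pi.single Q a) R = 0)
  (hBH : ∀ Q p, Disjoint (LinearMap.range (componentD k D V d Q (p + 1))) (H' Q p))
  (hZ : ∀ Q p, LinearMap.range (componentD k D V d Q (p + 1)) ⊔ H' Q p =
    LinearMap.ker (componentD k D V d Q p))
  (hZB : ∀ Q p, Disjoint (LinearMap.ker (componentD k D V d Q p)) (B' Q p))
  (htop : ∀ Q p, LinearMap.ker (componentD k D V d Q p) ⊔ B' Q p = ⊤)
  (hiso : ∀ Q p, Submodule.map (componentD k D V d Q p) (B' Q p) =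
    LinearMap.range (componentD k D V d Q p))

lemma tailC_zero (p : ℕ) (Q : D) : tailC d p (0 : ∀ R, V R p) Q = 0 := by
  unfold tailC
  refine Finset.sum_eq_zero fun R _ => ?_
  simp

include htri hZ in
lemma d_cond_iff (q : ℕ) (a b : ∀ Q, V Q (q + 1)) (ha : ∀ Q, a Q ∈ H' Q (q + 1)) (Q : D) :
    d (q + 1) (a + b) Q
      = componentD k D V d Q (q + 1) (b Q) + tailC d (q + 1) (a + b) Q := by
  rw [d_apply_eq d htri (q + 1) (a + b) Q]
  congr 1
  have : (a + b) Q = a Q + b Q := rfl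
  rw [this, map_add]
  have ha0 : componentD k D V d Q (q + 1) (a Q) = 0 :=
    H'_le_ker d H' hZ Q (q + 1) (ha Q)
  rw [ha0, zero_add]

include htri hBH hZ hZB htop hiso in
lemma main_existsUnique (q : ℕ) (a : ∀ Q, V Q (q + 1)) (ha : ∀ Q, a Q ∈ H' Q (q + 1)) :
    ∃! b : ∀ Q, V Q (q + 1), (∀ Q, b Q ∈ B' Q (q + 1)) ∧
      ∀ Q, d (q + 1) (a + b) Q ∈ H' Q q ⊔ B' Q q := by
  have wf : WellFounded ((· > ·) : D → D → Prop) := (Finite.to_wellFoundedGT (α := D)).wf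
  set F : ∀ Q : D, (∀ R : D, R > Q → V R (q + 1)) → V Q (q + 1) :=
    fun Q ih => (step_existsUnique d H' B' hBH hZ hZB htop hiso Q q
      (tailC d (q + 1) (fun R => if h : Q < R then a R + ih R h else 0) Q)).choose with hF
  set b : ∀ Q : D, V Q (q + 1) := fun Q => wf.fix F Q with hb
  have hb_eq : ∀ Q, b Q = F Q (fun R _ => b R) := fun Q => wf.fix_eq F Q
  have hFspec : ∀ (Q : D) (ih : ∀ R : D, R > Q → V R (q + 1)), F Q ih ∈ B' Q (q + 1) ∧
      componentD k D V d Q (q + 1) (F Q ih)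
        + tailC d (q + 1) (fun R => if h : Q < R then a R + ih R h else 0) Q
        ∈ H' Q q ⊔ B' Q q := fun Q ih =>
    (step_existsUnique d H' B' hBH hZ hZB htop hiso Q q
      (tailC d (q + 1) (fun R => if h : Q < R then a R + ih R h else 0) Q)).choose_spec.1
  have hspec : ∀ Q : D, b Q ∈ B' Q (q + 1) ∧
      componentD k D V d Q (q + 1) (b Q) + tailC d (q + 1) (a + b) Q ∈ H' Q q ⊔ B' Q q := by
    intro Q
    have hsp := hFspec Q (fun R _ => b R)
    have htail : tailC d (q + 1) (fun R => if h : Q < R then a R + (fun R _ => b R) R h else 0) Q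
        = tailC d (q + 1) (a + b) Q := by
      refine tailC_congr d (q + 1) _ _ Q fun R hR => ?_
      rw [dif_pos hR]; rfl
    rw [htail] at hsp
    rw [hb_eq Q]
    exact hsp
  refine ⟨b, ⟨fun Q => (hspec Q).1, fun Q => ?_⟩, ?_⟩
  · rw [d_cond_iff d H' htri hZ q a b ha Q]
    exact (hspec Q).2
  · rintro y ⟨hyB, hy⟩
    funext Q
    induction Q using WellFounded.induction wf with
    | _ Q ih =>
      have htail2 : tailC d (q + 1) (a + y) Q = tailC d (q + 1) (a + b) Q := by
        refine tailC_congr d (q + 1) _ _ Q fun R hR => ?_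
        show a R + y R = a R + b R
        rw [ih R hR]
      have h1 : y Q ∈ B' Q (q + 1) ∧
          componentD k D V d Q (q + 1) (y Q) + tailC d (q + 1) (a + b) Q ∈ H' Q q ⊔ B' Q q := by
        refine ⟨hyB Q, ?_⟩
        rw [← htail2, ← d_cond_iff d H' htri hZ q a y ha Q]
        exact hy Q
      have h2 := (step_existsUnique d H' B' hBH hZ hZB htop hiso Q q
        (tailC d (q + 1) (a + b) Q))
      have hbQ : b Q ∈ B' Q (q + 1) ∧
          componentD k D V d Q (q + 1) (b Q) + tailC d (q + 1) (a + b) Q ∈ H' Q q ⊔ B' Q q :=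
        hspec Q
      exact h2.unique h1 hbQ

include htri hBH hZ hZB htop hiso in
lemma support_lemma (q : ℕ) (Q0 : D) (a b : ∀ R, V R (q + 1))
    (ha : ∀ R, a R ∈ H' R (q + 1)) (haQ : ∀ R, R ≠ Q0 → a R = 0)
    (hbB : ∀ R, b R ∈ B' R (q + 1))
    (hcond : ∀ R, d (q + 1) (a + b) R ∈ H' R q ⊔ B' R q) :
    ∀ P, ¬ P < Q0 → b P = 0 := by
  have wf : WellFounded ((· > ·) : D → D → Prop) := (Finite.to_wellFoundedGT (α := D)).wf
  intro P
  induction P using WellFounded.induction wf with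
  | _ P ih =>
    intro hP
    have htail0 : tailC d (q + 1) (a + b) P = 0 := by
      rw [tailC_congr d (q + 1) (a + b) 0 P ?_, tailC_zero]
      intro R hR
      have hRQ0 : R ≠ Q0 := fun h => hP (h ▸ hR)
      have hRlt : ¬ R < Q0 := fun h => hP (hR.trans h)
      show a R + b R = 0
      rw [haQ R hRQ0, ih R hR hRlt, add_zero]
    have hc := hcond P
    rw [d_cond_iff d H' htri hZ q a b ha P, htail0, add_zero] at hc
    have hdisj := (isCompl_B d H' B' hBH hZ hZB htop P q).disjoint
    have h0 : componentD k D V d P (q + 1) (b P) = 0 :=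
      Submodule.disjoint_def.mp hdisj _ (LinearMap.mem_range_self _ (b P)) hc
    exact Submodule.disjoint_def.mp (hZB P (q + 1)) (b P) h0 (hbB P)

end Aux3

section Final
attribute [local instance] Classical.propDecidable
set_option linter.unusedSectionVars false
variable {k : Type*} [Field k] {D : Type*} [Fintype D] [PartialOrder D] [DecidableEq D]
  {V : D → ℕ → Type*} [∀ Q p, AddCommGroup (V Q p)] [∀ Q p, Module k (V Q p)]
  (d : ∀ p : ℕ, ((Q : D) → V Q p) →ₗ[k] ((Q : D) → V Q (p - 1)))
  (B' : (Q : D) → (p : ℕ) → Submodule k (V Q p))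
  (hd0 : d 0 = 0)
  (hZB : ∀ Q p, Disjoint (LinearMap.ker (componentD k D V d Q p)) (B' Q p))

include hd0 hZB in
lemma B'_zero_eq_bot (Q : D) (x : V Q 0) (hx : x ∈ B' Q 0) : x = 0 := by
  refine Submodule.disjoint_def.mp (hZB Q 0) x ?_ hx
  rw [LinearMap.mem_ker, componentD_apply, hd0]
  rfl

end Final


/-- For a `D`-decomposed chain complex `(K, d)` over a field `k`, with
chosen splittings `K(Q)_p = B(Q)_p ⊕ H'(Q)_p ⊕ B'(Q)_{p-1}` (where
`B(Q)_p ⊕ H'(Q)_p = Z(Q)_p` and `d(Q)` maps `B'(Q)_{p-1}` isomorphically onto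
`B(Q)_{p-1}`): for every `p` and every `a ∈ H'_p` there is a unique `b = f(a) ∈ B'_p`
with `d (a + b) ∈ H'_{p-1} ⊕ B'_{p-1}`; moreover if `a ∈ H'(Q)_p` then `f(a)` is
supported on `{P : P < Q}`. -/
theorem exists_unique_correction (k : Type*) [Field k]
    (D : Type*) [Fintype D] [PartialOrder D] [DecidableEq D]
    (V : D → ℕ → Type*) [∀ Q p, AddCommGroup (V Q p)] [∀ Q p, Module k (V Q p)]
    (d : ∀ p : ℕ, ((Q : D) → V Q p) →ₗ[k] ((Q : D) → V Q (p - 1)))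
    (hd0 : d 0 = 0)
    (hdd : ∀ p : ℕ, (d p).comp (d (p + 1)) = 0)
    (htri : ∀ (p : ℕ) (Q R : D) (a : V Q p), ¬ R ≤ Q → d p (Pi.single Q a) R = 0)
    (H' B' : (Q : D) → (p : ℕ) → Submodule k (V Q p))
    (hBH : ∀ Q p, Disjoint (LinearMap.range (componentD k D V d Q (p + 1))) (H' Q p))
    (hZ : ∀ Q p, LinearMap.range (componentD k D V d Q (p + 1)) ⊔ H' Q p =
      LinearMap.ker (componentD k D V d Q p))
    (hZB : ∀ Q p, Disjoint (LinearMap.ker (componentD k D V d Q p)) (B' Q p))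
    (htop : ∀ Q p, LinearMap.ker (componentD k D V d Q p) ⊔ B' Q p = ⊤)
    (hiso : ∀ Q p, Submodule.map (componentD k D V d Q p) (B' Q p) =
      LinearMap.range (componentD k D V d Q p)) :
    (∀ (p : ℕ) (a : (Q : D) → V Q p),
      a ∈ Submodule.pi Set.univ (fun Q => H' Q p) →
      ∃! b : (Q : D) → V Q p,
        b ∈ Submodule.pi Set.univ (fun Q => B' Q p) ∧
        d p (a + b) ∈
          Submodule.pi Set.univ (fun Q => H' Q (p - 1) ⊔ B' Q (p - 1))) ∧
    (∀ (p : ℕ) (Q : D) (a b : (R : D) → V R p),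
      a ∈ Submodule.pi Set.univ (fun R => H' R p) →
      (∀ R, R ≠ Q → a R = 0) →
      b ∈ Submodule.pi Set.univ (fun R => B' R p) →
      d p (a + b) ∈
        Submodule.pi Set.univ (fun R => H' R (p - 1) ⊔ B' R (p - 1)) →
      ∀ P, ¬ P < Q → b P = 0) := by

  constructor
  · intro p a ha
    match p with
    | 0 =>
      refine ⟨0, ⟨Submodule.zero_mem _, ?_⟩, ?_⟩
      · rw [add_zero, hd0]
        exact Submodule.zero_mem _
      · rintro y ⟨hyB, -⟩
        funext Q
        exact B'_zero_eq_bot d B' hd0 hZB Q (y Q)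
          (Submodule.mem_pi.mp hyB Q (Set.mem_univ Q))
    | q + 1 =>
      have ha' : ∀ Q, a Q ∈ H' Q (q + 1) :=
        fun Q => Submodule.mem_pi.mp ha Q (Set.mem_univ Q)
      obtain ⟨b, ⟨hbB, hbd⟩, huniq⟩ :=
        main_existsUnique d H' B' htri hBH hZ hZB htop hiso q a ha'
      refine ⟨b, ⟨Submodule.mem_pi.mpr fun Q _ => hbB Q, ?_⟩, ?_⟩
      · exact Submodule.mem_pi.mpr fun Q _ => hbd Q
      · rintro y ⟨hyB, hyd⟩
        exact huniq y ⟨fun Q => Submodule.mem_pi.mp hyB Q (Set.mem_univ Q),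
          fun Q => Submodule.mem_pi.mp hyd Q (Set.mem_univ Q)⟩
  · intro p Q a b ha haQ hbB hcond P hP
    match p with
    | 0 =>
      exact B'_zero_eq_bot d B' hd0 hZB P (b P)
        (Submodule.mem_pi.mp hbB P (Set.mem_univ P))
    | q + 1 =>
      exact support_lemma d H' B' htri hBH hZ hZB htop hiso q Q a b
        (fun R => Submodule.mem_pi.mp ha R (Set.mem_univ R)) haQ
        (fun R => Submodule.mem_pi.mp hbB R (Set.mem_univ R))
        (fun R => Submodule.mem_pi.mp hcond R (Set.mem_univ R)) P hP
end

section
/- In the setup of a D-decomposed chain complex with chosen splittings: the map f : H'_p → B'_p assigning to a the unique element f(a) ∈ B'_p with d(a + f(a)) ∈ H'_{p−1} ⊕ B'_{p−1} is k-linear, and the graded subspace M of K with M_p = {a + f(a) : a ∈ H'_p} is a subcomplex of K, i.e. d(M_p) ⊆ M_{p−1} for all p. -/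
/-- For a `D`-decomposed chain complex `(K, d)` over a field `k` with
chosen splittings as in the setup, let `f` assign to each `a ∈ H'_p` the unique element
`f(a) ∈ B'_p` with `d (a + f(a)) ∈ H'_{p-1} ⊕ B'_{p-1}`.  Then `f` is `k`-linear on
`H'_p`, and the graded subspace `M` with `M_p = {a + f(a) : a ∈ H'_p}` is a subcomplex
of `K`, i.e. `d(M_p) ⊆ M_{p-1}`. -/
theorem correction_linear_and_graph_subcomplex (k : Type*) [Field k]
    (D : Type*) [Fintype D] [PartialOrder D] [DecidableEq D]
    (V : D → ℕ → Type*) [∀ Q p, AddCommGroup (V Q p)] [∀ Q p, Module k (V Q p)]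
    (d : ∀ p : ℕ, ((Q : D) → V Q p) →ₗ[k] ((Q : D) → V Q (p - 1)))
    (hd0 : d 0 = 0)
    (hdd : ∀ p : ℕ, (d p).comp (d (p + 1)) = 0)
    (htri : ∀ (p : ℕ) (Q R : D) (a : V Q p), ¬ R ≤ Q → d p (Pi.single Q a) R = 0)
    (H' B' : (Q : D) → (p : ℕ) → Submodule k (V Q p))
    (hBH : ∀ Q p, Disjoint (LinearMap.range (componentD k D V d Q (p + 1))) (H' Q p))
    (hZ : ∀ Q p, LinearMap.range (componentD k D V d Q (p + 1)) ⊔ H' Q p =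
      LinearMap.ker (componentD k D V d Q p))
    (hZB : ∀ Q p, Disjoint (LinearMap.ker (componentD k D V d Q p)) (B' Q p))
    (htop : ∀ Q p, LinearMap.ker (componentD k D V d Q p) ⊔ B' Q p = ⊤)
    (hiso : ∀ Q p, Submodule.map (componentD k D V d Q p) (B' Q p) =
      LinearMap.range (componentD k D V d Q p))
    (f : ∀ p : ℕ, ((Q : D) → V Q p) → ((Q : D) → V Q p))
    (hf : ∀ (p : ℕ) (a : (Q : D) → V Q p),
      a ∈ Submodule.pi Set.univ (fun Q => H' Q p) →
      f p a ∈ Submodule.pi Set.univ (fun Q => B' Q p) ∧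
      d p (a + f p a) ∈
        Submodule.pi Set.univ (fun Q => H' Q (p - 1) ⊔ B' Q (p - 1))) :
    (∀ (p : ℕ) (a b : (Q : D) → V Q p),
      a ∈ Submodule.pi Set.univ (fun Q => H' Q p) →
      b ∈ Submodule.pi Set.univ (fun Q => H' Q p) →
      f p (a + b) = f p a + f p b) ∧
    (∀ (p : ℕ) (c : k) (a : (Q : D) → V Q p),
      a ∈ Submodule.pi Set.univ (fun Q => H' Q p) →
      f p (c • a) = c • f p a) ∧
    (∀ (p : ℕ) (a : (Q : D) → V Q p),
      a ∈ Submodule.pi Set.univ (fun Q => H' Q p) →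
      ∃ a' : (Q : D) → V Q (p - 1),
        a' ∈ Submodule.pi Set.univ (fun Q => H' Q (p - 1)) ∧
        d p (a + f p a) = a' + f (p - 1) a') := by
  classical
  -- key vanishing lemma: an element of B'_p whose differential lies in H' ⊔ B' is zero
  have key : ∀ (p : ℕ) (c : (Q : D) → V Q p),
      c ∈ Submodule.pi Set.univ (fun Q => B' Q p) →
      d p c ∈ Submodule.pi Set.univ (fun Q => H' Q (p - 1) ⊔ B' Q (p - 1)) →
      c = 0 := by
    intro p c hc hdc
    have hall : ∀ Q, c Q = 0 := by
      intro Q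
      refine (Finite.to_wellFoundedGT.wf).induction (C := fun Q => c Q = 0) Q (fun Q ih => ?_)
      -- compute the Q-component of d p c
      have hcomp : d p c Q = componentD k D V d Q p (c Q) := by
        have hc' : c = ∑ R, Pi.single R (c R) := (Finset.univ_sum_single c).symm
        rw [hc', map_sum, Finset.sum_apply]
        rw [Finset.sum_eq_single Q]
        · simp [componentD]
        · intro R _ hRQ
          by_cases hle : Q ≤ R
          · have : Q < R := lt_of_le_of_ne hle (Ne.symm hRQ)
            rw [ih R this]
            simp
          · exact htri p R Q (c R) hle
        · simp
      have hmem : componentD k D V d Q p (c Q) ∈ H' Q (p - 1) ⊔ B' Q (p - 1) := by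
        rw [← hcomp]; exact hdc Q trivial
      cases p with
      | zero =>
        have hker : componentD k D V d Q 0 (c Q) = 0 := by
          simp [componentD, hd0]
        exact (Submodule.disjoint_def.mp (hZB Q 0)) _ hker (hc Q trivial)
      | succ q =>
        have hrange : componentD k D V d Q (q + 1) (c Q) ∈
            LinearMap.range (componentD k D V d Q (q + 1)) :=
          ⟨c Q, rfl⟩
        have hkerle : LinearMap.range (componentD k D V d Q (q + 1)) ≤
            LinearMap.ker (componentD k D V d Q q) := by
          rw [← hZ Q q]; exact le_sup_left
        have hH'le : H' Q q ≤ LinearMap.ker (componentD k D V d Q q) := by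
          rw [← hZ Q q]; exact le_sup_right
        obtain ⟨h, hh, b, hb, hhb⟩ := Submodule.mem_sup.mp hmem
        have hbker : b ∈ LinearMap.ker (componentD k D V d Q q) := by
          have : b = componentD k D V d Q (q + 1) (c Q) - h := by
            rw [← hhb]; abel
          rw [this]
          exact Submodule.sub_mem _ (hkerle hrange) (hH'le hh)
        have hb0 : b = 0 := (Submodule.disjoint_def.mp (hZB Q q)) _ hbker hb
        have hx0 : componentD k D V d Q (q + 1) (c Q) = 0 := by
          have : componentD k D V d Q (q + 1) (c Q) = h := by
            rw [← hhb, hb0, add_zero]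
          rw [this]
          exact (Submodule.disjoint_def.mp (hBH Q q)) _ (this ▸ hrange) hh
        exact (Submodule.disjoint_def.mp (hZB Q (q + 1))) _ hx0 (hc Q trivial)
    funext Q; exact hall Q
  -- uniqueness of the correction term
  have uniq : ∀ (p : ℕ) (a b : (Q : D) → V Q p),
      a ∈ Submodule.pi Set.univ (fun Q => H' Q p) →
      b ∈ Submodule.pi Set.univ (fun Q => B' Q p) →
      d p (a + b) ∈ Submodule.pi Set.univ (fun Q => H' Q (p - 1) ⊔ B' Q (p - 1)) →
      b = f p a := by
    intro p a b ha hb hdab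
    obtain ⟨hfa, hdfa⟩ := hf p a ha
    have h1 : b - f p a ∈ Submodule.pi Set.univ (fun Q => B' Q p) :=
      Submodule.sub_mem _ hb hfa
    have h2 : d p (b - f p a) ∈
        Submodule.pi Set.univ (fun Q => H' Q (p - 1) ⊔ B' Q (p - 1)) := by
      have : d p (b - f p a) = d p (a + b) - d p (a + f p a) := by
        rw [← map_sub]; congr 1; abel
      rw [this]
      exact Submodule.sub_mem _ hdab hdfa
    have := key p (b - f p a) h1 h2
    rw [sub_eq_zero] at this
    exact this
  refine ⟨?_, ?_, ?_⟩
  · -- additivity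
    intro p a b ha hb
    obtain ⟨hfa, hdfa⟩ := hf p a ha
    obtain ⟨hfb, hdfb⟩ := hf p b hb
    refine (uniq p (a + b) (f p a + f p b) (Submodule.add_mem _ ha hb)
      (Submodule.add_mem _ hfa hfb) ?_).symm
    have : a + b + (f p a + f p b) = (a + f p a) + (b + f p b) := by abel
    rw [this, map_add]
    exact Submodule.add_mem _ hdfa hdfb
  · -- homogeneity
    intro p c a ha
    obtain ⟨hfa, hdfa⟩ := hf p a ha
    refine (uniq p (c • a) (c • f p a) (Submodule.smul_mem _ c ha)
      (Submodule.smul_mem _ c hfa) ?_).symm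
    rw [← smul_add, map_smul]
    exact Submodule.smul_mem _ c hdfa
  · -- the graph is a subcomplex
    intro p a ha
    obtain ⟨hfa, hdfa⟩ := hf p a ha
    have hdec : ∀ Q, ∃ h ∈ H' Q (p - 1), ∃ b ∈ B' Q (p - 1),
        h + b = d p (a + f p a) Q := fun Q => Submodule.mem_sup.mp (hdfa Q trivial)
    choose a' ha' b' hb' hab using hdec
    have hx : d p (a + f p a) = a' + b' := by
      funext Q; exact (hab Q).symm
    have ha'pi : a' ∈ Submodule.pi Set.univ (fun Q => H' Q (p - 1)) :=
      fun Q _ => ha' Q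
    have hb'pi : b' ∈ Submodule.pi Set.univ (fun Q => B' Q (p - 1)) :=
      fun Q _ => hb' Q
    have hd0' : d (p - 1) (a' + b') = 0 := by
      rw [← hx]
      cases p with
      | zero =>
        have : d 0 (a + f 0 a) = 0 := by rw [hd0]; rfl
        rw [this]
        exact map_zero _
      | succ q =>
        exact LinearMap.ext_iff.mp (hdd q) (a + f (q + 1) a)
    have hb'f : b' = f (p - 1) a' := by
      refine uniq (p - 1) a' b' ha'pi hb'pi ?_
      rw [hd0']
      exact Submodule.zero_mem _
    exact ⟨a', ha'pi, by rw [hx, hb'f]⟩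
end

section
/- Let E be a finite set and 𝒜 a finite set of nonzero functions E → ℕ that is generic, i.e. for any two distinct a, b ∈ 𝒜 and any i ∈ E, a(i) ≠ 0 implies a(i) ≠ b(i). Then for every σ ⊆ 𝒜 the poset B(Q_σ) = {τ ⊆ 𝒜 : Q_τ = Q_σ}, ordered by inclusion, has a unique minimal element μ and a unique maximal element M and equals the interval {τ : μ ⊆ τ ⊆ M}; in particular B(Q_σ) is order-isomorphic to the Boolean lattice of all subsets of M ∖ μ. -/
/-- Let `E` be a finite set and `𝒜` a finite set of nonzero functions
`E → ℕ` that is generic: for distinct `a, b ∈ 𝒜` and `i ∈ E`, `a i ≠ 0` implies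
`a i ≠ b i`.  Then for every `σ ⊆ 𝒜` the poset
`B(Q_σ) = {τ ⊆ 𝒜 : Q_τ = Q_σ}` (where `Q_τ` is the pointwise maximum of `τ`,
ordered by inclusion) has a unique minimal element `μ` and a unique maximal element `M`
and equals the interval `{τ : μ ⊆ τ ⊆ M}`; in particular it is order-isomorphic to the
Boolean lattice of subsets of `M ∖ μ`. -/
theorem interval_structure_of_generic (E : Type*) [Fintype E]
    (A : Finset (E → ℕ)) (hA0 : ∀ a ∈ A, a ≠ 0)
    (hgen : ∀ a ∈ A, ∀ b ∈ A, a ≠ b → ∀ i, a i ≠ 0 → a i ≠ b i)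
    (σ : Finset (E → ℕ)) (hσ : σ ⊆ A) :
    ∃ μ M : Finset (E → ℕ),
      (μ ⊆ A ∧ (fun i => μ.sup fun a => a i) = (fun i => σ.sup fun a => a i)) ∧
      (M ⊆ A ∧ (fun i => M.sup fun a => a i) = (fun i => σ.sup fun a => a i)) ∧
      (∀ τ : Finset (E → ℕ),
        (τ ⊆ A ∧ (fun i => τ.sup fun a => a i) = (fun i => σ.sup fun a => a i)) ↔
          (μ ⊆ τ ∧ τ ⊆ M)) ∧
      Nonempty
        (({τ : Finset (E → ℕ) //
            τ ⊆ A ∧ (fun i => τ.sup fun a => a i) = (fun i => σ.sup fun a => a i)}) ≃o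
          Finset {x // x ∈ M \ μ}) := by
  classical
  set Q : E → ℕ := fun i => σ.sup fun a => a i with hQdef
  -- uniqueness of achievers of nonzero values
  have uniq : ∀ (i : E), ∀ a ∈ A, ∀ b ∈ A, a i ≠ 0 → a i = b i → a = b := by
    intro i a ha b hb hne heq
    by_contra h
    exact hgen a ha b hb h i hne heq
  set M : Finset (E → ℕ) := A.filter (fun a => ∀ i, a i ≤ Q i) with hMdef
  set μ : Finset (E → ℕ) := A.filter (fun a => ∃ i, Q i ≠ 0 ∧ a i = Q i) with hμdef
  have hσM : σ ⊆ M := by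
    intro a ha
    refine Finset.mem_filter.mpr ⟨hσ ha, fun i => ?_⟩
    exact Finset.le_sup (f := fun a => a i) ha
  have hμσ : μ ⊆ σ := by
    intro a ha
    rw [hμdef, Finset.mem_filter] at ha
    obtain ⟨haA, i, hQne, hai⟩ := ha
    have hne : σ.Nonempty := by
      by_contra h
      rw [Finset.not_nonempty_iff_eq_empty] at h
      simp [hQdef, h] at hQne
    obtain ⟨b, hbσ, hb⟩ := σ.exists_mem_eq_sup hne (fun a => a i)
    have : a = b := uniq i a haA b (hσ hbσ) (by rw [hai]; exact hQne) (hai.trans hb)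
    rw [this]; exact hbσ
  have hμM : μ ⊆ M := fun a ha => hσM (hμσ ha)
  -- key characterization
  have key : ∀ τ : Finset (E → ℕ),
      (τ ⊆ A ∧ (fun i => τ.sup fun a => a i) = Q) ↔ (μ ⊆ τ ∧ τ ⊆ M) := by
    intro τ
    constructor
    · rintro ⟨hτA, hsup⟩
      constructor
      · intro a ha
        rw [hμdef, Finset.mem_filter] at ha
        obtain ⟨haA, i, hQne, hai⟩ := ha
        have hQτ : (τ.sup fun a => a i) = Q i := congrFun hsup i
        have hne : τ.Nonempty := by
          by_contra h
          rw [Finset.not_nonempty_iff_eq_empty] at h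
          rw [h] at hQτ; simp at hQτ; exact hQne hQτ.symm
        obtain ⟨b, hbτ, hb⟩ := τ.exists_mem_eq_sup hne (fun a => a i)
        have : a = b := uniq i a haA b (hτA hbτ) (by rw [hai]; exact hQne)
          (by rw [hai, ← hQτ, hb])
        rw [this]; exact hbτ
      · intro a ha
        refine Finset.mem_filter.mpr ⟨hτA ha, fun i => ?_⟩
        calc a i ≤ τ.sup fun a => a i := Finset.le_sup (f := fun a => a i) ha
          _ = Q i := congrFun hsup i
    · rintro ⟨hμτ, hτM⟩
      have hτA : τ ⊆ A := fun a ha => (Finset.mem_filter.mp (hτM ha)).1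
      refine ⟨hτA, funext fun i => le_antisymm ?_ ?_⟩
      · exact Finset.sup_le fun a ha => (Finset.mem_filter.mp (hτM ha)).2 i
      · rcases Nat.eq_zero_or_pos (Q i) with h0 | hpos
        · rw [h0]; exact Nat.zero_le _
        · have hne : σ.Nonempty := by
            by_contra h
            rw [Finset.not_nonempty_iff_eq_empty] at h
            simp [hQdef, h] at hpos
          obtain ⟨b, hbσ, hb⟩ := σ.exists_mem_eq_sup hne (fun a => a i)
          have hbμ : b ∈ μ := Finset.mem_filter.mpr
            ⟨hσ hbσ, i, Nat.pos_iff_ne_zero.mp hpos, hb.symm⟩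
          calc Q i = b i := hb
            _ ≤ τ.sup fun a => a i := Finset.le_sup (f := fun a => a i) (hμτ hbμ)
  refine ⟨μ, M, (key μ).mpr ⟨le_refl _, hμM⟩, (key M).mpr ⟨hμM, le_refl _⟩, key, ?_⟩
  -- order isomorphism
  let p : (E → ℕ) → Prop := fun x => x ∈ M \ μ
  refine ⟨{
    toFun := fun τ => τ.1.subtype p
    invFun := fun s => ⟨μ ∪ s.map (Function.Embedding.subtype p), (key _).mpr
      ⟨Finset.subset_union_left, Finset.union_subset hμM (by
        intro x hx
        simp only [Finset.mem_map, Function.Embedding.coe_subtype] at hx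
        obtain ⟨⟨y, hy⟩, _, rfl⟩ := hx
        exact (Finset.mem_sdiff.mp hy).1)⟩⟩
    left_inv := by
      intro τ
      obtain ⟨hμτ, hτM⟩ := (key τ.1).mp τ.2
      apply Subtype.ext
      simp only [Finset.subtype_map]
      ext x
      simp only [Finset.mem_union, Finset.mem_filter]
      constructor
      · rintro (h | ⟨h, _⟩)
        · exact hμτ h
        · exact h
      · intro h
        by_cases hx : x ∈ μ
        · exact Or.inl hx
        · exact Or.inr ⟨h, Finset.mem_sdiff.mpr ⟨hτM h, hx⟩⟩
    right_inv := by
      intro s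
      ext x
      have hxμ : x.1 ∉ μ := (Finset.mem_sdiff.mp x.2).2
      simp only [Finset.mem_subtype, Finset.mem_union, Finset.mem_map,
        Function.Embedding.coe_subtype]
      constructor
      · rintro (h | ⟨y, hys, hyx⟩)
        · exact absurd h hxμ
        · rwa [← Subtype.coe_injective hyx]
      · intro h; exact Or.inr ⟨x, h, rfl⟩
    map_rel_iff' := by
      intro τ₁ τ₂
      obtain ⟨hμτ₁, hτM₁⟩ := (key τ₁.1).mp τ₁.2
      obtain ⟨hμτ₂, hτM₂⟩ := (key τ₂.1).mp τ₂.2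
      show τ₁.1.subtype p ≤ τ₂.1.subtype p ↔ τ₁.1 ≤ τ₂.1
      constructor
      · intro h x hx
        by_cases hxμ : x ∈ μ
        · exact hμτ₂ hxμ
        · have : (⟨x, Finset.mem_sdiff.mpr ⟨hτM₁ hx, hxμ⟩⟩ : {x // p x}) ∈ τ₁.1.subtype p :=
            Finset.mem_subtype.mpr hx
          exact Finset.mem_subtype.mp (h this)
      · intro h y hy
        exact Finset.mem_subtype.mpr (h (Finset.mem_subtype.mp hy)) }⟩
end

section
/- Let ι be a finite set with r elements and P : ι → ℕ a function with P(i) ≥ 1 for every i ∈ ι. Let 𝓜 be a finite set of functions ι → ℕ such that (a) every v ∈ 𝓜 satisfies v(i) < P(i) for some i ∈ ι, and (b) for any two distinct u, v ∈ 𝓜 and every i ∈ ι, P(i) ≤ max(u(i), v(i)). Then |𝓜| ≤ r. -/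
/-- Let `ι` be a finite set with `r` elements, `P : ι → ℕ` with
`P i ≥ 1` for every `i`, and `𝓜` a finite set of functions `ι → ℕ` such that every
`v ∈ 𝓜` satisfies `v i < P i` for some `i`, and for any two distinct `u, v ∈ 𝓜` and
every `i`, `P i ≤ max (u i) (v i)`.  Then `|𝓜| ≤ r`. -/
theorem card_le_of_max_ge (ι : Type*) [Fintype ι] (P : ι → ℕ)
    (hP : ∀ i, 1 ≤ P i) (M : Finset (ι → ℕ))
    (ha : ∀ v ∈ M, ∃ i, v i < P i)
    (hb : ∀ u ∈ M, ∀ v ∈ M, u ≠ v → ∀ i, P i ≤ max (u i) (v i)) :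
    M.card ≤ Fintype.card ι := by
  choose f hf using ha
  have hinj : Function.Injective (fun x : {v // v ∈ M} => f x.1 x.2) := by
    rintro ⟨u, hu⟩ ⟨v, hv⟩ h
    simp only at h
    by_contra hne
    have hne' : u ≠ v := fun h' => hne (Subtype.ext h')
    have h1 := hb u hu v hv hne' (f v hv)
    have h2 := hf u hu
    have h3 := hf v hv
    rw [h] at h2
    simp only [le_max_iff] at h1
    omega
  calc M.card = Fintype.card {v // v ∈ M} := (Fintype.card_coe M).symm
    _ ≤ Fintype.card ι := Fintype.card_le_of_injective _ hinj
end
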